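/- arXiv:1504.03033 — 6 statements merged into one kernel-verified Lean document; each statement's English description precedes it below -/
import Mathlib

section
/- For the linear graph L_n with n = 2k or n = 2k−1, and 1 ≤ i < j ≤ k, there exists ε > 0 such that for all λ ∈ (0, ε), I_i(λ) < I_j(λ). -/
/-- Importance of vertex `j` in the linear graph `L_n` under the PWP method. -/
noncomputable def impL (n j : ℕ) (lam : ℝ) : ℝ :=
  (1 / (Real.exp lam - 1)) *
    ((∑ i ∈ Finset.Icc 1 (j - 1), lam ^ (j - i) / (Nat.factorial (j - i))) +
     (∑ i ∈ Finset.Icc (j + 1) n, lam ^ (i - j) / (Nat.factorial (i - j))))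

/-!
Clearing the positive factor `1 / (exp λ - 1)`, the importance of vertex `j` is `S (j - 1) + S (n - j)`,
where `S m = ∑_{t=1}^m λ^t / t!`. For `i < j` with `i + j ≤ n`, passing from `i` to `j` gains the terms
of degrees `i, …, j - 1` and loses those of degrees `n - j + 1, …, n - i`; since `i < n - j + 1`, the
gain dominates the loss as `λ → 0⁺`.
-/

open Filter Topology Finset Nat

noncomputable def expPartialSum (m : ℕ) (x : ℝ) : ℝ :=
  ∑ t ∈ Ioc 0 m, x ^ t / t !

theorem impL_eq_expPartialSum (n j : ℕ) (x : ℝ) :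
    impL n j x = 1 / (Real.exp x - 1) * (expPartialSum (j - 1) x + expPartialSum (n - j) x) := by
  unfold impL expPartialSum
  congr 2
  · refine sum_nbij' (fun i => j - i) (fun t => j - t) ?_ ?_ ?_ ?_ fun _ _ => rfl <;>
      intro a ha <;> simp only [mem_Icc, mem_Ioc] at * <;> omega
  · refine sum_nbij' (fun i => i - j) (fun t => t + j) ?_ ?_ ?_ ?_ fun _ _ => rfl <;>
      intro a ha <;> simp only [mem_Icc, mem_Ioc] at * <;> omega

theorem expPartialSum_add_sum_Ioc {a b : ℕ} (hab : a ≤ b) (x : ℝ) :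
    expPartialSum a x + ∑ t ∈ Ioc a b, x ^ t / t ! = expPartialSum b x :=
  sum_Ioc_consecutive _ (Nat.zero_le a) hab

theorem sum_Ioc_pow_div_factorial_le {x : ℝ} (hx0 : 0 ≤ x) (hx1 : x ≤ 1) (c d : ℕ) :
    ∑ t ∈ Ioc c d, x ^ t / t ! ≤ (d - c : ℕ) * x ^ (c + 1) :=
  calc ∑ t ∈ Ioc c d, x ^ t / t !
      ≤ ∑ _t ∈ Ioc c d, x ^ (c + 1) := by
        refine sum_le_sum fun t ht => ?_
        have hct : c + 1 ≤ t := (mem_Ioc.mp ht).1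
        calc x ^ t / t ! ≤ x ^ t := div_le_self (by positivity) (by exact_mod_cast t.factorial_pos)
          _ ≤ x ^ (c + 1) := pow_le_pow_of_le_one hx0 hx1 hct
    _ = (d - c : ℕ) * x ^ (c + 1) := by rw [sum_const, Nat.card_Ioc, nsmul_eq_mul]

theorem pow_div_factorial_le_sum_Ioc {x : ℝ} (hx0 : 0 ≤ x) {a b : ℕ} (hab : a < b) :
    x ^ (a + 1) / (a + 1)! ≤ ∑ t ∈ Ioc a b, x ^ t / t ! :=
  single_le_sum (f := fun t => x ^ t / t !) (fun _ _ => by positivity) (mem_Ioc.mpr ⟨by omega, hab⟩)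

theorem eventually_sum_Ioc_lt_sum_Ioc {a b c : ℕ} (hab : a < b) (hac : a < c) (d : ℕ) :
    ∀ᶠ x : ℝ in 𝓝[>] 0, ∑ t ∈ Ioc c d, x ^ t / t ! < ∑ t ∈ Ioc a b, x ^ t / t ! := by
  have hsmall : ∀ᶠ x : ℝ in 𝓝 0, ((d - c : ℕ) : ℝ) * x < 1 / (a + 1)! := by
    have hlim : Tendsto (fun x : ℝ => (d - c : ℕ) * x) (𝓝 0) (𝓝 0) := by
      simpa using (continuous_const_mul ((d - c : ℕ) : ℝ)).tendsto 0
    exact hlim.eventually (eventually_lt_nhds (by positivity))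
  filter_upwards [eventually_mem_nhdsWithin, nhdsWithin_le_nhds (eventually_lt_nhds one_pos),
    nhdsWithin_le_nhds hsmall] with x (hx0 : 0 < x) hx1 hxC
  calc ∑ t ∈ Ioc c d, x ^ t / t !
      ≤ (d - c : ℕ) * x ^ (c + 1) := sum_Ioc_pow_div_factorial_le hx0.le hx1.le c d
    _ ≤ (d - c : ℕ) * x ^ (a + 2) :=
        mul_le_mul_of_nonneg_left (pow_le_pow_of_le_one hx0.le hx1.le (by omega)) (by positivity)
    _ = x ^ (a + 1) * ((d - c : ℕ) * x) := by ring
    _ < x ^ (a + 1) * (1 / (a + 1)!) := by gcongr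
    _ = x ^ (a + 1) / (a + 1)! := by ring
    _ ≤ ∑ t ∈ Ioc a b, x ^ t / t ! := pow_div_factorial_le_sum_Ioc hx0.le hab

theorem eventually_impL_lt_impL {n i j : ℕ} (hi : 1 ≤ i) (hij : i < j) (hijn : i + j ≤ n) :
    ∀ᶠ x in 𝓝[>] (0 : ℝ), impL n i x < impL n j x := by
  filter_upwards [eventually_mem_nhdsWithin,
    eventually_sum_Ioc_lt_sum_Ioc (a := i - 1) (b := j - 1) (c := n - j) (by omega) (by omega) (n - i)]
    with x (hx : 0 < x) hlt
  rw [impL_eq_expPartialSum, impL_eq_expPartialSum]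
  refine mul_lt_mul_of_pos_left ?_ (one_div_pos.mpr (sub_pos.mpr (Real.one_lt_exp_iff.mpr hx)))
  rw [← expPartialSum_add_sum_Ioc (a := i - 1) (b := j - 1) (by omega),
    ← expPartialSum_add_sum_Ioc (a := n - j) (b := n - i) (by omega)]
  linarith

theorem stmt4_general (n k i j : ℕ) (hn : n = 2 * k ∨ n = 2 * k - 1)
    (hi : 1 ≤ i) (hij : i < j) (hjk : j ≤ k) :
    ∃ ε > (0:ℝ), ∀ lam : ℝ, 0 < lam → lam < ε → impL n i lam < impL n j lam := by
  obtain ⟨ε, hε, hsub⟩ := mem_nhdsGT_iff_exists_Ioo_subset.mp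
    (eventually_impL_lt_impL (n := n) hi hij (by omega))
  exact ⟨ε, hε, fun lam h0 hε' => hsub ⟨h0, hε'⟩⟩

/-- For small ,  whenever , where  or . -/
theorem stmt4 (n k i j : ℕ) (hk : 2 ≤ k) (hn : n = 2 * k ∨ n = 2 * k - 1)
    (hi : 1 ≤ i) (hij : i < j) (hjk : j ≤ k) :
    ∃ ε > (0:ℝ), ∀ lam : ℝ, 0 < lam → lam < ε → impL n i lam < impL n j lam :=
  stmt4_general n k i j hn hi hij hjk
end

section
/- For the linear graph L_n with n = 2k or n = 2k−1, and 1 ≤ i < j ≤ k, there exists M > 0 such that for all λ > M, I_i(λ) > I_j(λ). -/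
open Filter Asymptotics Finset

noncomputable def expSubOneTrunc (m : ℕ) (x : ℝ) : ℝ :=
  ∑ t ∈ Icc 1 m, x ^ t / t.factorial

lemma sum_Icc_one_sub_reflect (j : ℕ) (f : ℕ → ℝ) :
    ∑ i ∈ Icc 1 (j - 1), f (j - i) = ∑ t ∈ Icc 1 (j - 1), f t := by
  refine sum_nbij' (j - ·) (j - ·) ?_ ?_ ?_ ?_ (fun _ _ => rfl) <;>
    simp only [mem_Icc] <;> omega

lemma sum_Icc_sub_shift (n j : ℕ) (f : ℕ → ℝ) :
    ∑ i ∈ Icc (j + 1) n, f (i - j) = ∑ t ∈ Icc 1 (n - j), f t := by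
  refine sum_nbij' (· - j) (· + j) ?_ ?_ ?_ ?_ (fun _ _ => rfl) <;>
    simp only [mem_Icc] <;> omega

lemma impL_eq_expSubOneTrunc (n j : ℕ) (x : ℝ) :
    impL n j x =
      1 / (Real.exp x - 1) * (expSubOneTrunc (j - 1) x + expSubOneTrunc (n - j) x) := by
  rw [impL, sum_Icc_one_sub_reflect j (fun t => x ^ t / t.factorial),
    sum_Icc_sub_shift n j (fun t => x ^ t / t.factorial), expSubOneTrunc, expSubOneTrunc]

lemma expSubOneTrunc_nonneg {x : ℝ} (hx : 0 ≤ x) (m : ℕ) : 0 ≤ expSubOneTrunc m x :=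
  sum_nonneg fun _ _ => by positivity

lemma expSubOneTrunc_mono {x : ℝ} (hx : 0 ≤ x) {m m' : ℕ} (h : m ≤ m') :
    expSubOneTrunc m x ≤ expSubOneTrunc m' x :=
  sum_le_sum_of_subset_of_nonneg (Icc_subset_Icc_right h) fun _ _ _ => by positivity

lemma expSubOneTrunc_succ (m : ℕ) (x : ℝ) :
    expSubOneTrunc (m + 1) x = expSubOneTrunc m x + x ^ (m + 1) / (m + 1).factorial :=
  sum_Icc_succ_top (by omega) _

lemma expSubOneTrunc_isLittleO (m : ℕ) :
    expSubOneTrunc m =o[atTop] fun x => x ^ (m + 1) := by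
  have h : expSubOneTrunc m = ∑ t ∈ Icc 1 m, fun x : ℝ => (t.factorial : ℝ)⁻¹ * x ^ t := by
    ext x
    simp only [expSubOneTrunc, Finset.sum_apply, div_eq_inv_mul]
  rw [h]
  refine IsLittleO.sum fun t ht => (isLittleO_pow_pow_atTop_of_lt ?_).const_mul_left _
  rw [mem_Icc] at ht
  omega

lemma eventually_expSubOneTrunc_lt (m : ℕ) :
    ∀ᶠ x in atTop, expSubOneTrunc m x < x ^ (m + 1) / (m + 1).factorial := by
  have hfac : (0 : ℝ) < (m + 1).factorial := by positivity
  have h : expSubOneTrunc m =o[atTop] fun x => ((m + 1).factorial : ℝ)⁻¹ * x ^ (m + 1) :=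
    (isLittleO_const_mul_right_iff (inv_ne_zero hfac.ne')).mpr (expSubOneTrunc_isLittleO m)
  have hpos : ∀ᶠ x : ℝ in atTop, 0 < ((m + 1).factorial : ℝ)⁻¹ * x ^ (m + 1) :=
    (eventually_gt_atTop 0).mono fun x hx => by positivity
  have hnorm := h.eventuallyLT_norm_of_eventually_pos (hpos.mono fun x hx => norm_pos_iff.mpr hx.ne')
  filter_upwards [hnorm, hpos] with x hlt hx
  rw [Real.norm_of_nonneg hx.le] at hlt
  rw [div_eq_inv_mul]
  exact (le_abs_self _).trans_lt hlt

lemma eventually_expSubOneTrunc_add_lt {a b c d : ℕ} (hc : c < a) (hd : d < a) :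
    ∀ᶠ x in atTop,
      expSubOneTrunc c x + expSubOneTrunc d x < expSubOneTrunc a x + expSubOneTrunc b x := by
  obtain ⟨m, rfl⟩ : ∃ m, a = m + 1 := ⟨a - 1, by omega⟩
  filter_upwards [eventually_expSubOneTrunc_lt m, eventually_ge_atTop 0] with x hlt hx
  rw [expSubOneTrunc_succ]
  linarith [expSubOneTrunc_mono hx (Nat.le_of_lt_succ hc),
    expSubOneTrunc_mono hx (Nat.le_of_lt_succ hd), expSubOneTrunc_nonneg hx b]

theorem stmt5_general (n k i j : ℕ) (hn : n = 2 * k ∨ n = 2 * k - 1)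
    (hij : i < j) (hjk : j ≤ k) :
    ∃ M > (0:ℝ), ∀ lam : ℝ, M < lam → impL n i lam > impL n j lam := by
  have hnj : n - j < n - i := by omega
  -- `i + j ≤ 2 * k - 1 ≤ n`
  have hj : j - 1 < n - i := by omega
  have h := eventually_expSubOneTrunc_add_lt (b := i - 1) hnj hj
  obtain ⟨M, hM, hlt⟩ := (atTop_basis_Ioi' 0).eventually_iff.mp h
  refine ⟨M, hM, fun lam hlam => ?_⟩
  have hexp : 0 < Real.exp lam - 1 := sub_pos.mpr (Real.one_lt_exp_iff.mpr (hM.trans hlam))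
  rw [impL_eq_expSubOneTrunc, impL_eq_expSubOneTrunc]
  exact mul_lt_mul_of_pos_left (by linarith [hlt hlam]) (by positivity)

/-- For large ,  whenever , where  or . -/
theorem stmt5 (n k i j : ℕ) (hk : 2 ≤ k) (hn : n = 2 * k ∨ n = 2 * k - 1)
    (hi : 1 ≤ i) (hij : i < j) (hjk : j ≤ k) :
    ∃ M > (0:ℝ), ∀ lam : ℝ, M < lam → impL n i lam > impL n j lam :=
  stmt5_general n k i j hn hij hjk
end

section
/- For positive integers n and i with n − 2i − 2 ≥ 0 (i.e. i + 1 < n − i − 1), the inequality ((n−i)(i+1))^{n−2i−2} < ((n−i−1)!/(i+1)!)² holds; equivalently ((n−i)!/i!)^{1/(n−2i)} < ((n−i−1)!/(i+1)!)^{1/(n−2i−2)}. -/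
/-!
Put `a = i + 1` and `k = n - 2i - 2`, so that `(n-i-1)!/(i+1)! = (a+1)(a+2)⋯(a+k)`.
Squaring this product and pairing the factor `a + j` with its mirror image `a + k + 1 - j` gives
`(a + j)(a + k + 1 - j) = a(a + k + 1) + j(k + 1 - j) > a(a + k + 1) = (i+1)(n-i)`.
-/

open Finset

namespace Nat

theorem mul_lt_mul_mirror {a k j : ℕ} (hj : j < k) :
    a * (a + k + 1) < (a + 1 + j) * (a + 1 + (k - 1 - j)) := by
  obtain ⟨m, rfl⟩ : ∃ m, k = j + 1 + m := ⟨k - j - 1, by omega⟩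
  rw [show j + 1 + m - 1 - j = m by omega]
  nlinarith

theorem pow_mul_lt_ascFactorial_sq {a k : ℕ} (ha : 0 < a) (hk : 0 < k) :
    (a * (a + k + 1)) ^ k < (a + 1).ascFactorial k ^ 2 :=
  calc (a * (a + k + 1)) ^ k = ∏ _j ∈ range k, a * (a + k + 1) := by
        rw [prod_const, card_range]
    _ < ∏ j ∈ range k, (a + 1 + j) * (a + 1 + (k - 1 - j)) :=
        prod_lt_prod_of_nonempty (fun _ _ => by positivity)
          (fun _ hj => mul_lt_mul_mirror (mem_range.mp hj)) (nonempty_range_iff.mpr hk.ne')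
    _ = (a + 1).ascFactorial k ^ 2 := by
        rw [prod_mul_distrib, prod_range_reflect (fun j => a + 1 + j), ← ascFactorial_eq_prod_range,
          sq]

theorem pow_mul_lt_factorial_div_factorial_sq {a k : ℕ} (ha : 0 < a) (hk : 0 < k) :
    ((a : ℝ) * (a + k + 1)) ^ k < ((a + k)! / a ! : ℝ) ^ 2 := by
  rw [← factorial_mul_ascFactorial, cast_mul, mul_div_cancel_left₀ _ (by positivity)]
  exact_mod_cast pow_mul_lt_ascFactorial_sq ha hk

end Nat

theorem stmt7_general (n i : ℕ) (h : i + 1 < n - i - 1) :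
    (((n - i) * (i + 1) : ℝ)) ^ (n - 2 * i - 2) <
      ((Nat.factorial (n - i - 1) : ℝ) / (Nat.factorial (i + 1))) ^ 2 := by
  obtain ⟨k, rfl⟩ : ∃ k, n = i + 1 + k + i + 1 := ⟨n - 2 * i - 2, by omega⟩
  have key := Nat.pow_mul_lt_factorial_div_factorial_sq (by omega : 0 < i + 1) (by omega : 0 < k)
  rw [show i + 1 + k + i + 1 - 2 * i - 2 = k by omega,
    show i + 1 + k + i + 1 - i - 1 = i + 1 + k by omega, mul_comm]
  convert key using 2
  push_cast
  ring

/-- For positive integers `n`, `i` with `i + 1 < n - i - 1`, one has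
`((n-i)(i+1))^(n-2i-2) < ((n-i-1)!/(i+1)!)^2`. -/
theorem stmt7 (n i : ℕ) (hi : 1 ≤ i) (h : i + 1 < n - i - 1) :
    (((n - i) * (i + 1) : ℝ)) ^ (n - 2 * i - 2) <
      ((Nat.factorial (n - i - 1) : ℝ) / (Nat.factorial (i + 1))) ^ 2 :=
  stmt7_general n i h
end

section
/- For any λ > 0 and 1 ≤ i < j ≤ n, the indirect influence of vertex i in the linear graph L_n strictly exceeds that of vertex j: F_i(λ) > F_j(λ), where (e^λ − 1) F_i(λ) = Σ_{m=1}^{n−i} λ^m/m! for i < n and F_n(λ) = 0. Hence the ordering by indirect influence on the vertices of L_n is 1 > 2 > ⋯ > n for every λ > 0. -/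
/-- Indirect influence of vertex `i` in the linear graph `L_n` under the PWP method:
`F_i(λ) = (1/(e^λ - 1)) Σ_{m=1}^{n-i} λ^m/m!` (so `F_n = 0`). -/
noncomputable def inflL (n i : ℕ) (lam : ℝ) : ℝ :=
  (1 / (Real.exp lam - 1)) * ∑ m ∈ Finset.Icc 1 (n - i), lam ^ m / (Nat.factorial m)

open Nat in
theorem sum_Icc_pow_div_factorial_strictMono {x : ℝ} (hx : 0 < x) :
    StrictMono fun k : ℕ => ∑ m ∈ Finset.Icc 1 k, x ^ m / m ! :=
  strictMono_nat_of_lt_succ fun k => by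
    rw [Finset.sum_Icc_succ_top (by omega)]
    exact lt_add_of_pos_right _ (by positivity)

theorem stmt10_general (n i j : ℕ) (hij : i < j) (hjn : j ≤ n)
    (lam : ℝ) (hlam : 0 < lam) :
    inflL n i lam > inflL n j lam := by
  have hscale : 0 < 1 / (Real.exp lam - 1) :=
    one_div_pos.mpr (sub_pos.mpr (Real.one_lt_exp_iff.mpr hlam))
  exact mul_lt_mul_of_pos_left
    (sum_Icc_pow_div_factorial_strictMono hlam (by omega : n - j < n - i)) hscale

/-- For every `λ > 0` and `1 ≤ i < j ≤ n`, `F_i(λ) > F_j(λ)`: the ordering of the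
vertices of `L_n` by indirect influence is `1 > 2 > ⋯ > n`. -/
theorem stmt10 (n i j : ℕ) (hn : 2 ≤ n) (hi : 1 ≤ i) (hij : i < j) (hjn : j ≤ n)
    (lam : ℝ) (hlam : 0 < lam) :
    inflL n i lam > inflL n j lam :=
  stmt10_general n i j hij hjn lam hlam
end

section
/- For the directed n-cycle on ℤ_n, define T_k(λ) = (1/(e^λ − 1)) Σ_{l=0}^∞ λ^{k+ln}/(k+ln)! for k ∈ {1,...,n}. Then for every λ ∈ (0, 2), T_1(λ) > T_2(λ) > ⋯ > T_n(λ). -/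
/-- Indirect influence along distance k in the n-cycle under the PWP method. -/
noncomputable def Tcyc (n k : ℕ) (lam : ℝ) : ℝ :=
  (1 / (Real.exp lam - 1)) * ∑' l : ℕ, lam ^ (k + l * n) / (Nat.factorial (k + l * n))

/-! Each series term `λ^(k+ln)/(k+ln)!` of `T_k` exceeds the corresponding term of `T_(k+1)`,
since their ratio is `λ/(k+ln+1) ≤ λ/2 < 1`; summing termwise gives `T_k > T_(k+1)`. -/

theorem pow_succ_div_factorial_succ_lt {x : ℝ} (hx : 0 < x) {m : ℕ} (hxm : x < m + 1) :
    x ^ (m + 1) / ((m + 1).factorial : ℝ) < x ^ m / (m.factorial : ℝ) := by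
  have hterm : 0 < x ^ m / (m.factorial : ℝ) := by positivity
  calc x ^ (m + 1) / ((m + 1).factorial : ℝ) = x ^ m / m.factorial * (x / (m + 1)) := by
        rw [Nat.factorial_succ]; push_cast; field_simp; ring
    _ < x ^ m / m.factorial * 1 := by
        gcongr; exact (div_lt_one (by positivity)).mpr hxm
    _ = x ^ m / m.factorial := mul_one _

theorem summable_pow_div_factorial_arithmetic (x : ℝ) {n : ℕ} (hn : 0 < n) (c : ℕ) :
    Summable fun l : ℕ => x ^ (c + l * n) / ((c + l * n).factorial : ℝ) :=
  (Real.summable_pow_div_factorial x).comp_injective fun a b h => by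
    simpa [hn.ne'] using h

theorem stmt13_general (n : ℕ) (hn : 2 ≤ n) (lam : ℝ) (h0 : 0 < lam) (h2 : lam < 2)
    (k : ℕ) (hk1 : 1 ≤ k) :
    Tcyc n k lam > Tcyc n (k + 1) lam := by
  have hterm : ∀ l : ℕ, lam ^ (k + 1 + l * n) / ((k + 1 + l * n).factorial : ℝ)
      < lam ^ (k + l * n) / ((k + l * n).factorial : ℝ) := fun l => by
    rw [add_right_comm]
    refine pow_succ_div_factorial_succ_lt h0 ?_
    have : (1 : ℝ) ≤ (k + l * n : ℕ) := by exact_mod_cast hk1.trans (Nat.le_add_right _ _)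
    linarith
  have hsum := (summable_pow_div_factorial_arithmetic lam (by omega : 0 < n) (k + 1)).tsum_lt_tsum
    (fun l => (hterm l).le) (hterm 0) (summable_pow_div_factorial_arithmetic lam (by omega) k)
  have hscale : 0 < 1 / (Real.exp lam - 1) := by
    simpa using Real.one_lt_exp_iff.mpr h0
  exact mul_lt_mul_of_pos_left hsum hscale

/-- For every λ ∈ (0,2), the indirect influences in the n-cycle satisfy
`T_1(λ) > T_2(λ) > ⋯ > T_n(λ)`. -/
theorem stmt13 (n : ℕ) (hn : 2 ≤ n) (lam : ℝ) (h0 : 0 < lam) (h2 : lam < 2)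
    (k : ℕ) (hk1 : 1 ≤ k) (hkn : k ≤ n - 1) :
    Tcyc n k lam > Tcyc n (k + 1) lam :=
  stmt13_general n hn lam h0 h2 k hk1
end

section
/- The sequence of crossing points c_{i,i+1} = ((n−i)!/i!)^{1/(n−2i)} is strictly increasing in i: for n = 2k or n = 2k−1 and 1 ≤ i ≤ k−2, c_{i,i+1} < c_{i+1,i+2}; hence c_{1,2} < c_{2,3} < ⋯ < c_{k−1,k}. -/
/-!
Write `s = n - 2i`. Then `c_{i,i+1}^s = (i+1)(i+2)⋯(i+s)` and `c_{i+1,i+2}^(s-2) = (i+2)⋯(i+s-1)`,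
so `c_{i,i+1}` and `c_{i+1,i+2}` are the geometric means of these two runs of consecutive integers.
The longer run adds the two outer factors `(i+1)(i+s)`, and this product is strictly smaller than
the product `(i+1+t)(i+s-t)` of any other symmetric pair, so appending it lowers the geometric mean.
-/

open Finset

namespace Nat

lemma cast_factorial_add_div_factorial (a k : ℕ) :
    ((a + k)! : ℝ) / a ! = (a + 1).ascFactorial k := by
  rw [← factorial_mul_ascFactorial a k, cast_mul, mul_div_cancel_left₀ _ (by positivity)]

lemma ascFactorial_add_two (b w : ℕ) :
    b.ascFactorial (w + 2) = b * (b + 1).ascFactorial w * (b + w + 1) := by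
  rw [ascFactorial_eq_prod_range, ascFactorial_eq_prod_range, prod_range_succ, prod_range_succ']
  simp only [add_assoc, add_comm 1]
  ring

lemma pow_mul_lt_sq_ascFactorial {b w : ℕ} (hb : 0 < b) (hw : 0 < w) :
    (b * (b + w + 1)) ^ w < ((b + 1).ascFactorial w) ^ 2 := by
  have hsq : ((b + 1).ascFactorial w) ^ 2 = ∏ t ∈ range w, (b + 1 + t) * (b + w - t) := by
    have hreflect : ∏ t ∈ range w, (b + 1 + t) = ∏ t ∈ range w, (b + w - t) := by
      rw [← prod_range_reflect]
      refine prod_congr rfl fun t ht => ?_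
      have := mem_range.mp ht
      omega
    rw [ascFactorial_eq_prod_range, sq, prod_mul_distrib]
    nth_rewrite 2 [hreflect]
    rfl
  rw [hsq, pow_eq_prod_const]
  refine prod_lt_prod_of_nonempty (fun _ _ => by positivity) (fun t ht => ?_)
    (nonempty_range_iff.mpr hw.ne')
  -- `(b + 1 + t) * (b + w - t) - b * (b + w + 1) = (t + 1) * (w - t)`
  obtain ⟨u, rfl⟩ : ∃ u, w = t + 1 + u := ⟨w - t - 1, by have := mem_range.mp ht; omega⟩
  rw [show b + (t + 1 + u) - t = b + 1 + u by omega]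
  nlinarith

lemma ascFactorial_pow_lt_pow_ascFactorial {b w : ℕ} (hb : 0 < b) (hw : 0 < w) :
    b.ascFactorial (w + 2) ^ w < (b + 1).ascFactorial w ^ (w + 2) := by
  set G := (b + 1).ascFactorial w
  have hG : 0 < G ^ w := pow_pos (ascFactorial_pos b w) w
  calc b.ascFactorial (w + 2) ^ w = G ^ w * (b * (b + w + 1)) ^ w := by
        rw [ascFactorial_add_two, ← mul_pow]; ring
    _ < G ^ w * G ^ 2 := Nat.mul_lt_mul_of_pos_left (pow_mul_lt_sq_ascFactorial hb hw) hG
    _ = G ^ (w + 2) := (pow_add G w 2).symm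

end Nat

lemma Real.rpow_one_div_lt_rpow_one_div_of_pow_lt {x y : ℝ} (hx : 0 ≤ x) (hy : 0 ≤ y) {m w : ℕ}
    (hm : m ≠ 0) (hw : w ≠ 0) (h : x ^ w < y ^ m) : x ^ (1 / (m : ℝ)) < y ^ (1 / (w : ℝ)) := by
  refine lt_of_pow_lt_pow_left₀ (m * w) (by positivity) ?_
  rwa [pow_mul, mul_comm m w, pow_mul, one_div, one_div, Real.rpow_inv_natCast_pow hx hm,
    Real.rpow_inv_natCast_pow hy hw]

theorem stmt19_general (n k i : ℕ) (hk : 3 ≤ k) (hn : n = 2 * k ∨ n = 2 * k - 1)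
    (hik : i ≤ k - 2) :
    ((Nat.factorial (n - i) : ℝ) / (Nat.factorial i)) ^ ((1 : ℝ) / (n - 2 * i : ℕ)) <
      ((Nat.factorial (n - (i + 1)) : ℝ) / (Nat.factorial (i + 1)))
        ^ ((1 : ℝ) / (n - 2 * (i + 1) : ℕ)) := by
  obtain ⟨w, hw⟩ : ∃ w, n - 2 * (i + 1) = w + 1 := ⟨n - 2 * (i + 1) - 1, by omega⟩
  rw [hw, show n - 2 * i = w + 1 + 2 by omega, show n - i = i + (w + 1 + 2) by omega,
    show n - (i + 1) = (i + 1) + (w + 1) by omega, Nat.cast_factorial_add_div_factorial,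
    Nat.cast_factorial_add_div_factorial]
  refine Real.rpow_one_div_lt_rpow_one_div_of_pow_lt (by positivity) (by positivity)
    (by omega) (by omega) ?_
  exact_mod_cast Nat.ascFactorial_pow_lt_pow_ascFactorial i.succ_pos w.succ_pos

/-- The crossing points `c_{i,i+1} = ((n-i)!/i!)^(1/(n-2i))` are strictly increasing in `i`:
for `n = 2k` or `n = 2k-1` and `1 ≤ i ≤ k-2`, `c_{i,i+1} < c_{i+1,i+2}`. -/
theorem stmt19 (n k i : ℕ) (hk : 3 ≤ k) (hn : n = 2 * k ∨ n = 2 * k - 1)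
    (hi : 1 ≤ i) (hik : i ≤ k - 2) :
    ((Nat.factorial (n - i) : ℝ) / (Nat.factorial i)) ^ ((1 : ℝ) / (n - 2 * i : ℕ)) <
      ((Nat.factorial (n - (i + 1)) : ℝ) / (Nat.factorial (i + 1)))
        ^ ((1 : ℝ) / (n - 2 * (i + 1) : ℕ)) :=
  stmt19_general n k i hk hn hik
end
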